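/- arXiv:2305.10529 — 3 statements merged into one kernel-verified Lean document; each statement's English description precedes it below -/
import Mathlib

section
/- Let b ≥ 2 be an integer. The set P_b of real numbers in [0,1) that are Poisson generic in base b is a Π⁰₃ set: there exists a doubly indexed family (F_{m,n})_{m,n∈ℕ} of closed subsets of [0,1) such that P_b = ⋂_m ⋃_n F_{m,n}. In particular, P_b is a Borel set. -/
open Filter MeasureTheory

/-- `d` is the base-`b` digit expansion of `x`: `d j` is the digit `x_{j+1}`, all digits are
less than `b`, infinitely many digits are nonzero, and `x = ∑_{j≥1} x_j b^{-j}`. -/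
def IsExpansion (b : ℕ) (x : ℝ) (d : ℕ → ℕ) : Prop :=
  (∀ j, d j < b) ∧ (∀ m, ∃ j, m ≤ j ∧ d j ≠ 0) ∧
    x = ∑' j : ℕ, (d j : ℝ) / (b : ℝ) ^ (j + 1)

/-- Number of occurrences of the word `w` as a consecutive block lying entirely within the
first `n` digits of the sequence `d`. -/
noncomputable def occCnt (d : ℕ → ℕ) (w : List ℕ) (n : ℕ) : ℕ :=
  Nat.card {p : ℕ // p + w.length ≤ n ∧ ∀ t < w.length, d (p + t) = w.getD t 0}

/-- Number of occurrences of the length-`k` word `w` as a consecutive block lying entirely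
within the first `n` digits of the sequence `d`. -/
noncomputable def occCntF {k : ℕ} (d : ℕ → ℕ) (w : Fin k → ℕ) (n : ℕ) : ℕ :=
  Nat.card {p : ℕ // p + k ≤ n ∧ ∀ t : Fin k, d (p + (t : ℕ)) = w t}

/-- `Z b d lam j k` is `b^{-k}` times the number of words of length `k` over `{0,…,b-1}`
occurring exactly `j` times in the prefix of length `⌊lam·b^k⌋ + k` of `d`. -/
noncomputable def Z (b : ℕ) (d : ℕ → ℕ) (lam : ℝ) (j k : ℕ) : ℝ :=
  (Nat.card {w : Fin k → Fin b //
      occCntF d (fun t => ((w t : Fin b) : ℕ)) (⌊lam * (b : ℝ) ^ k⌋₊ + k) = j} : ℝ) /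
    (b : ℝ) ^ k

/-- The digit sequence `d` is `lam`-Poisson generic in base `b`. -/
def LambdaPoisson (b : ℕ) (d : ℕ → ℕ) (lam : ℝ) : Prop :=
  ∀ j : ℕ, Tendsto (fun k => Z b d lam j k) atTop
    (nhds (Real.exp (-lam) * lam ^ j / (Nat.factorial j)))

/-- `x` is Poisson generic in base `b`: its base-`b` expansion is `lam`-Poisson generic for
every positive real `lam`. -/
def PoissonGeneric (b : ℕ) (x : ℝ) : Prop :=
  ∀ d, IsExpansion b x d → ∀ lam : ℝ, 0 < lam → LambdaPoisson b d lam

/-- `x` is Borel normal in base `b`: every finite word `w` over `{0,…,b-1}` occurs in the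
first `n` digits of the base-`b` expansion of `x` with frequency tending to `b^{-|w|}`. -/
def BorelNormal (b : ℕ) (x : ℝ) : Prop :=
  ∀ d, IsExpansion b x d → ∀ w : List ℕ, (∀ a ∈ w, a < b) →
    Tendsto (fun n => (occCnt d w n : ℝ) / n) atTop (nhds (1 / (b : ℝ) ^ w.length))

namespace PG

lemma occ_finite {k : ℕ} (d : ℕ → ℕ) (w : Fin k → ℕ) (n : ℕ) :
    {p : ℕ | p + k ≤ n ∧ ∀ t : Fin k, d (p + (t : ℕ)) = w t}.Finite :=
  (Set.finite_Iic n).subset (fun p hp => le_trans (Nat.le_add_right p k) hp.1)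

lemma occ_mono {k : ℕ} (d : ℕ → ℕ) (w : Fin k → ℕ) {n n' : ℕ} (h : n ≤ n') :
    occCntF d w n ≤ occCntF d w n' := by
  unfold occCntF
  rw [show {p : ℕ // p + k ≤ n ∧ ∀ t : Fin k, d (p + (t : ℕ)) = w t} =
    ↥{p : ℕ | p + k ≤ n ∧ ∀ t : Fin k, d (p + (t : ℕ)) = w t} from rfl,
    show {p : ℕ // p + k ≤ n' ∧ ∀ t : Fin k, d (p + (t : ℕ)) = w t} =
    ↥{p : ℕ | p + k ≤ n' ∧ ∀ t : Fin k, d (p + (t : ℕ)) = w t} from rfl,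
    Nat.card_coe_set_eq, Nat.card_coe_set_eq]
  exact Set.ncard_le_ncard (fun p hp => ⟨le_trans hp.1 h, hp.2⟩) (occ_finite d w n')

lemma occ_congr {k : ℕ} {d d' : ℕ → ℕ} (w : Fin k → ℕ) {n : ℕ}
    (h : ∀ i < n, d i = d' i) : occCntF d w n = occCntF d' w n := by
  unfold occCntF
  apply Nat.card_congr
  apply Equiv.subtypeEquivRight
  intro p
  constructor <;> rintro ⟨h1, h2⟩ <;> refine ⟨h1, fun t => ?_⟩
  · rw [← h (p + t) (lt_of_lt_of_le (by omega) h1)]; exact h2 t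
  · rw [h (p + t) (lt_of_lt_of_le (by omega) h1)]; exact h2 t

/-- prefix length -/
noncomputable def plen (b : ℕ) (lam : ℝ) (k : ℕ) : ℕ := ⌊lam * (b : ℝ) ^ k⌋₊ + k

lemma Z_congr (b : ℕ) {d d' : ℕ → ℕ} (lam : ℝ) (j k : ℕ)
    (h : ∀ i < plen b lam k, d i = d' i) : Z b d lam j k = Z b d' lam j k := by
  unfold Z
  congr 2
  apply Nat.card_congr
  apply Equiv.subtypeEquivRight
  intro w
  rw [show (⌊lam * (b : ℝ) ^ k⌋₊ + k) = plen b lam k from rfl,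
    occ_congr (fun t => ((w t : Fin b) : ℕ)) h]

/-- cumulative count -/
noncomputable def Wc (b : ℕ) (d : ℕ → ℕ) (lam : ℝ) (j k : ℕ) : ℕ :=
  Nat.card {w : Fin k → Fin b //
      occCntF d (fun t => ((w t : Fin b) : ℕ)) (⌊lam * (b : ℝ) ^ k⌋₊ + k) ≤ j}

lemma Wc_succ (b : ℕ) (d : ℕ → ℕ) (lam : ℝ) (j k : ℕ) :
    Wc b d lam (j+1) k = Wc b d lam j k +
      Nat.card {w : Fin k → Fin b //
      occCntF d (fun t => ((w t : Fin b) : ℕ)) (⌊lam * (b : ℝ) ^ k⌋₊ + k) = j + 1} := by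
  unfold Wc
  rw [show {w : Fin k → Fin b //
      occCntF d (fun t => ((w t : Fin b) : ℕ)) (⌊lam * (b : ℝ) ^ k⌋₊ + k) ≤ j + 1} =
      ↥{w : Fin k → Fin b |
      occCntF d (fun t => ((w t : Fin b) : ℕ)) (⌊lam * (b : ℝ) ^ k⌋₊ + k) ≤ j + 1} from rfl,
    show {w : Fin k → Fin b //
      occCntF d (fun t => ((w t : Fin b) : ℕ)) (⌊lam * (b : ℝ) ^ k⌋₊ + k) ≤ j} =
      ↥{w : Fin k → Fin b |
      occCntF d (fun t => ((w t : Fin b) : ℕ)) (⌊lam * (b : ℝ) ^ k⌋₊ + k) ≤ j} from rfl,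
    show {w : Fin k → Fin b //
      occCntF d (fun t => ((w t : Fin b) : ℕ)) (⌊lam * (b : ℝ) ^ k⌋₊ + k) = j + 1} =
      ↥{w : Fin k → Fin b |
      occCntF d (fun t => ((w t : Fin b) : ℕ)) (⌊lam * (b : ℝ) ^ k⌋₊ + k) = j + 1} from rfl,
    Nat.card_coe_set_eq, Nat.card_coe_set_eq, Nat.card_coe_set_eq]
  rw [show {w : Fin k → Fin b |
      occCntF d (fun t => ((w t : Fin b) : ℕ)) (⌊lam * (b : ℝ) ^ k⌋₊ + k) ≤ j + 1} =
      {w : Fin k → Fin b |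
      occCntF d (fun t => ((w t : Fin b) : ℕ)) (⌊lam * (b : ℝ) ^ k⌋₊ + k) ≤ j} ∪
      {w : Fin k → Fin b |
      occCntF d (fun t => ((w t : Fin b) : ℕ)) (⌊lam * (b : ℝ) ^ k⌋₊ + k) = j + 1} by
      ext w; simp only [Set.mem_setOf_eq, Set.mem_union]; omega]
  exact Set.ncard_union_eq (by
    rw [Set.disjoint_left]; intro w h1 h2
    simp only [Set.mem_setOf_eq] at h1 h2; omega) (Set.toFinite _) (Set.toFinite _)

lemma Wc_anti (b : ℕ) (d : ℕ → ℕ) {lam lam' : ℝ} (hb : 1 ≤ b) (h : lam ≤ lam') (j k : ℕ) :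
    Wc b d lam' j k ≤ Wc b d lam j k := by
  unfold Wc
  rw [show {w : Fin k → Fin b //
      occCntF d (fun t => ((w t : Fin b) : ℕ)) (⌊lam' * (b : ℝ) ^ k⌋₊ + k) ≤ j} =
      ↥{w : Fin k → Fin b |
      occCntF d (fun t => ((w t : Fin b) : ℕ)) (⌊lam' * (b : ℝ) ^ k⌋₊ + k) ≤ j} from rfl,
    show {w : Fin k → Fin b //
      occCntF d (fun t => ((w t : Fin b) : ℕ)) (⌊lam * (b : ℝ) ^ k⌋₊ + k) ≤ j} =
      ↥{w : Fin k → Fin b |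
      occCntF d (fun t => ((w t : Fin b) : ℕ)) (⌊lam * (b : ℝ) ^ k⌋₊ + k) ≤ j} from rfl,
    Nat.card_coe_set_eq, Nat.card_coe_set_eq]
  refine Set.ncard_le_ncard (fun w hw => ?_) (Set.toFinite _)
  refine le_trans (occ_mono _ _ ?_) hw
  have : ⌊lam * (b : ℝ) ^ k⌋₊ ≤ ⌊lam' * (b : ℝ) ^ k⌋₊ :=
    Nat.floor_mono (mul_le_mul_of_nonneg_right h (by positivity))
  omega

lemma Z_zero_eq_Wc (b : ℕ) (d : ℕ → ℕ) (lam : ℝ) (k : ℕ) :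
    Z b d lam 0 k = (Wc b d lam 0 k : ℝ) / (b : ℝ) ^ k := by
  unfold Z Wc
  congr 2
  apply Nat.card_congr
  exact Equiv.subtypeEquivRight (fun w => by omega)

lemma sum_Z_eq_Wc (b : ℕ) (d : ℕ → ℕ) (lam : ℝ) (j k : ℕ) :
    ∑ i ∈ Finset.range (j+1), Z b d lam i k = (Wc b d lam j k : ℝ) / (b : ℝ) ^ k := by
  induction j with
  | zero => simpa using Z_zero_eq_Wc b d lam k
  | succ j ih =>
    rw [Finset.sum_range_succ, ih, Wc_succ b d lam j k]
    unfold Z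
    push_cast
    ring



variable {b : ℕ} (hb : 2 ≤ b)

noncomputable def Dn (b : ℕ) (x : ℝ) (N : ℕ) : ℕ := ⌊x * (b : ℝ) ^ N⌋₊

noncomputable def dig (b : ℕ) (x : ℝ) (j : ℕ) : ℕ := Dn b x (j+1) - b * Dn b x j

/-- the b-adic rationals -/
def Cb (b : ℕ) : Set ℝ := ⋃ N : ℕ, ⋃ z : ℕ, {(z : ℝ) / (b : ℝ) ^ N}

lemma Cb_countable (b : ℕ) : (Cb b).Countable :=
  Set.countable_iUnion fun N => Set.countable_iUnion fun z => Set.countable_singleton _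

lemma mem_Cb {b : ℕ} {x : ℝ} : x ∈ Cb b ↔ ∃ N z : ℕ, x = (z : ℝ) / (b : ℝ) ^ N := by
  simp only [Cb, Set.mem_iUnion, Set.mem_singleton_iff]

include hb

lemma hb1 : (1 : ℝ) < (b : ℝ) := by exact_mod_cast hb.trans_lt' one_lt_two
lemma hb0 : (0 : ℝ) < (b : ℝ) := lt_trans one_pos (hb1 hb)

variable {x : ℝ} (hx0 : 0 ≤ x) (hx1 : x < 1)

include hx0

lemma Dn_le' (N : ℕ) : b * Dn b x N ≤ Dn b x (N+1) := by
  have h1 : (Dn b x N : ℝ) ≤ x * (b : ℝ) ^ N := Nat.floor_le (by positivity)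
  have h2 : ((b * Dn b x N : ℕ) : ℝ) ≤ x * (b : ℝ) ^ (N+1) := by
    push_cast
    rw [pow_succ]
    calc (b : ℝ) * Dn b x N ≤ (b:ℝ) * (x * (b:ℝ)^N) := by
          exact mul_le_mul_of_nonneg_left h1 (le_of_lt (hb0 hb))
      _ = x * ((b:ℝ)^N * b) := by ring
  exact Nat.le_floor h2

lemma Dn_lt (N : ℕ) : Dn b x (N+1) < b * Dn b x N + b := by
  have h2 : x * (b:ℝ)^N < Dn b x N + 1 := Nat.lt_floor_add_one _
  have : x * (b:ℝ)^(N+1) < (b * Dn b x N + b : ℕ) := by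
    push_cast
    rw [pow_succ]
    calc x * ((b:ℝ)^N * b) = (x * (b:ℝ)^N) * b := by ring
      _ < ((Dn b x N : ℝ) + 1) * b := by
          exact mul_lt_mul_of_pos_right h2 (hb0 hb)
      _ = (b:ℝ) * Dn b x N + b := by ring
  exact Nat.floor_lt (by positivity) |>.mpr this

lemma dig_lt (j : ℕ) : dig b x j < b := by
  have h1 := Dn_le' hb hx0 (x := x) j
  have h2 := Dn_lt hb hx0 (x := x) j
  unfold dig; omega

lemma dig_cast (j : ℕ) :
    (dig b x j : ℝ) = (Dn b x (j+1) : ℝ) - b * Dn b x j := by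
  have h1 := Dn_le' hb hx0 (x := x) j
  unfold dig
  push_cast [Nat.cast_sub h1]
  ring

include hx1

lemma Dn_zero : Dn b x 0 = 0 := by
  unfold Dn
  simp only [pow_zero, mul_one]
  exact Nat.floor_eq_zero.mpr hx1

lemma partial_sum (N : ℕ) :
    ∑ j ∈ Finset.range N, (dig b x j : ℝ) / (b : ℝ) ^ (j + 1) = (Dn b x N : ℝ) / (b : ℝ) ^ N := by
  have hbne : (b : ℝ) ≠ 0 := ne_of_gt (hb0 hb)
  have : ∀ j, (dig b x j : ℝ) / (b : ℝ) ^ (j + 1)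
      = (Dn b x (j+1) : ℝ) / (b:ℝ)^(j+1) - (Dn b x j : ℝ) / (b:ℝ)^j := by
    intro j
    rw [dig_cast hb hx0]
    field_simp
    ring
  rw [Finset.sum_congr rfl (fun j _ => this j), Finset.sum_range_sub
    (fun j => (Dn b x j : ℝ) / (b:ℝ)^j), Dn_zero hb hx0 hx1]
  simp

lemma x_sub_partial (N : ℕ) :
    0 ≤ x - (Dn b x N : ℝ) / (b:ℝ)^N ∧ x - (Dn b x N : ℝ) / (b:ℝ)^N < 1 / (b:ℝ)^N := by
  have hp : (0:ℝ) < (b:ℝ)^N := by positivity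
  have hfl : (Dn b x N : ℝ) ≤ x * (b:ℝ)^N := Nat.floor_le (by positivity)
  have hfu : x * (b:ℝ)^N < (Dn b x N : ℝ) + 1 := Nat.lt_floor_add_one _
  constructor
  · rw [sub_nonneg, div_le_iff₀ hp]
    linarith
  · rw [sub_lt_iff_lt_add, ← add_div, lt_div_iff₀ hp]
    linarith

omit hx0 hx1

/-- summability of digit series -/
lemma summable_digits {d : ℕ → ℕ} (hd : ∀ j, d j < b) :
    Summable (fun j : ℕ => (d j : ℝ) / (b : ℝ) ^ (j + 1)) := by
  have h1 : (0:ℝ) < b := hb0 hb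
  have hg : Summable (fun j : ℕ => (b:ℝ) * (1/(b:ℝ))^(j+1)) := by
    apply Summable.mul_left
    exact (summable_geometric_of_lt_one (by positivity) (by
      rw [div_lt_iff₀ h1]; linarith [hb1 hb])).comp_injective (add_left_injective 1)
  refine hg.of_nonneg_of_le (fun j => by positivity) (fun j => ?_)
  rw [div_pow, one_pow, mul_one_div, div_le_div_iff₀ (by positivity) (by positivity)]
  have : (d j : ℝ) ≤ (b:ℝ) := by exact_mod_cast (hd j).le
  nlinarith [pow_pos h1 (j+1)]

include hx0 hx1

lemma tsum_dig : x = ∑' j : ℕ, (dig b x j : ℝ) / (b : ℝ) ^ (j + 1) := by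
  have hsum := summable_digits hb (fun j => dig_lt hb hx0 (x := x) j)
  have hparts : Tendsto (fun N => ∑ j ∈ Finset.range N, (dig b x j : ℝ) / (b : ℝ) ^ (j + 1))
      atTop (nhds x) := by
    have hDn : Tendsto (fun N : ℕ => (Dn b x N : ℝ) / (b:ℝ)^N) atTop (nhds x) := by
      rw [Metric.tendsto_atTop]
      intro ε hε
      obtain ⟨N₀, hN₀⟩ := exists_pow_lt_of_lt_one hε
        (show 1/(b:ℝ) < 1 by rw [div_lt_iff₀ (hb0 hb)]; linarith [hb1 hb])
      refine ⟨N₀, fun N hN => ?_⟩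
      have h := x_sub_partial hb hx0 hx1 (x := x) N
      rw [Real.dist_eq, abs_sub_comm, abs_of_nonneg h.1]
      calc x - (Dn b x N : ℝ) / (b:ℝ)^N < 1/(b:ℝ)^N := h.2
        _ = (1/(b:ℝ))^N := by rw [div_pow, one_pow]
        _ ≤ (1/(b:ℝ))^N₀ := by
            apply pow_le_pow_of_le_one (by positivity) _ hN
            rw [div_le_one (hb0 hb)]; linarith [hb1 hb]
        _ < ε := hN₀
    exact hDn.congr (fun N => (partial_sum hb hx0 hx1 N).symm)
  exact tendsto_nhds_unique hparts hsum.hasSum.tendsto_sum_nat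

lemma dig_infinite (hC : x ∉ Cb b) : ∀ m, ∃ j, m ≤ j ∧ dig b x j ≠ 0 := by
  intro m
  by_contra hcon
  push_neg at hcon
  -- then Dn (j+1) = b * Dn j for all j ≥ m
  have hstep : ∀ j, m ≤ j → Dn b x (j+1) = b * Dn b x j := by
    intro j hj
    have h1 := Dn_le' hb hx0 (x := x) j
    have := hcon j hj
    unfold dig at this
    omega
  have hconst : ∀ N, m ≤ N → (Dn b x N : ℝ) / (b:ℝ)^N = (Dn b x m : ℝ) / (b:ℝ)^m := by
    intro N hN
    induction N with
    | zero => simp_all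
    | succ N ih =>
      rcases Nat.lt_or_ge m (N+1) with h | h
      · have hm : m ≤ N := by omega
        rw [hstep N hm]
        push_cast
        rw [← ih hm]
        have : (b:ℝ)^(N+1) = (b:ℝ)^N * b := pow_succ _ _
        rw [this]
        field_simp
      · have : m = N + 1 := by omega
        rw [this]
  -- x = Dn m / b^m
  have hxeq : x = (Dn b x m : ℝ) / (b:ℝ)^m := by
    by_contra hne
    have h0 : ∀ N, m ≤ N → 0 ≤ x - (Dn b x m : ℝ)/(b:ℝ)^m ∧
        x - (Dn b x m : ℝ)/(b:ℝ)^m < 1/(b:ℝ)^N := by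
      intro N hN
      rw [← hconst N hN]
      exact x_sub_partial hb hx0 hx1 N
    have hpos : 0 < x - (Dn b x m : ℝ)/(b:ℝ)^m :=
      lt_of_le_of_ne (h0 m le_rfl).1 (fun h => hne (by linarith [h.symm]))
    obtain ⟨N₀, hN₀⟩ := exists_pow_lt_of_lt_one hpos
      (show 1/(b:ℝ) < 1 by rw [div_lt_iff₀ (hb0 hb)]; linarith [hb1 hb])
    have := (h0 (max m N₀) (le_max_left _ _)).2
    have hle : (1:ℝ)/(b:ℝ)^(max m N₀) ≤ (1/(b:ℝ))^N₀ := by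
      rw [div_pow, one_pow]
      apply one_div_pow_le_one_div_pow_of_le (by linarith [hb1 hb]) (le_max_right _ _)
    linarith [hN₀]
  exact hC (mem_Cb.mpr ⟨m, Dn b x m, hxeq⟩)

omit hx0 hx1 in
lemma tail_le {d : ℕ → ℕ} (hd : ∀ j, d j < b) (j : ℕ) :
    ∑' i : ℕ, (d (i + (j+1)) : ℝ) / (b:ℝ)^(i + (j+1) + 1) ≤ 1/(b:ℝ)^(j+1) := by
  have h1 : (1:ℝ) < b := hb1 hb
  have hr : (0:ℝ) ≤ 1/(b:ℝ) := by positivity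
  have hr1 : (1:ℝ)/(b:ℝ) < 1 := by rw [div_lt_iff₀ (by linarith)]; linarith
  have hgsum : Summable (fun i : ℕ => ((b:ℝ)-1)/(b:ℝ)^(j+2) * (1/(b:ℝ))^i) :=
    (summable_geometric_of_lt_one hr hr1).mul_left _
  have hfsum : Summable (fun i : ℕ => (d (i + (j+1)) : ℝ) / (b:ℝ)^(i + (j+1) + 1)) := by
    have := (summable_nat_add_iff (f := fun i : ℕ => (d i : ℝ) / (b:ℝ)^(i+1)) (j+1)).mpr
      (summable_digits hb hd)
    exact this
  calc ∑' i : ℕ, (d (i + (j+1)) : ℝ) / (b:ℝ)^(i + (j+1) + 1)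
      ≤ ∑' i : ℕ, ((b:ℝ)-1)/(b:ℝ)^(j+2) * (1/(b:ℝ))^i := by
        refine Summable.tsum_le_tsum (fun i => ?_) hfsum hgsum
        have hdb : (d (i + (j+1)) : ℝ) ≤ (b:ℝ) - 1 := by
          have := hd (i + (j+1)); have : d (i + (j+1)) + 1 ≤ b := this
          have := (Nat.cast_le (α := ℝ)).mpr this; push_cast at this; linarith
        rw [div_pow, one_pow]
        rw [div_mul_div_comm, div_le_div_iff₀ (by positivity) (by positivity)]
        have hpow : (b:ℝ)^(i + (j+1) + 1) = (b:ℝ)^(j+2) * (b:ℝ)^i := by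
          rw [← pow_add]; ring_nf
        rw [hpow]
        have h2 : (0:ℝ) ≤ (b:ℝ)^(j+2) * (b:ℝ)^i := by positivity
        calc (d (i + (j+1)) : ℝ) * ((b:ℝ)^(j+2) * (b:ℝ)^i) 
            ≤ ((b:ℝ)-1) * ((b:ℝ)^(j+2) * (b:ℝ)^i) := by
              exact mul_le_mul_of_nonneg_right hdb h2
          _ = ((b:ℝ)-1) * 1 * ((b:ℝ)^(j+2) * (b:ℝ)^i) := by ring
    _ = ((b:ℝ)-1)/(b:ℝ)^(j+2) * (1 - 1/(b:ℝ))⁻¹ := by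
        rw [tsum_mul_left, tsum_geometric_of_lt_one hr hr1]
    _ = 1/(b:ℝ)^(j+1) := by
        have hb0' : (b:ℝ) ≠ 0 := by linarith
        have hbm1 : (b:ℝ) - 1 ≠ 0 := by linarith
        have : (1 - 1/(b:ℝ)) = ((b:ℝ)-1)/(b:ℝ) := by field_simp
        rw [this]
        rw [show (b:ℝ)^(j+2) = (b:ℝ)^(j+1) * b by rw [pow_succ]]
        field_simp

omit hx0 hx1 in
lemma expansion_lt_aux {d e : ℕ → ℕ} (hd : IsExpansion b x d) (he : IsExpansion b x e)
    {j : ℕ} (hde : ∀ i < j, d i = e i) (hlt : d j < e j) : False := by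
  have hdsum := summable_digits hb hd.1
  have hesum := summable_digits hb he.1
  have hsplitd := Summable.sum_add_tsum_nat_add (f := fun i : ℕ => (d i : ℝ) / (b:ℝ)^(i+1)) (j+1) hdsum
  have hsplite := Summable.sum_add_tsum_nat_add (f := fun i : ℕ => (e i : ℝ) / (b:ℝ)^(i+1)) (j+1) hesum
  set Td := ∑' i : ℕ, (d (i + (j+1)) : ℝ) / (b:ℝ)^(i + (j+1) + 1) with hTd
  set Te := ∑' i : ℕ, (e (i + (j+1)) : ℝ) / (b:ℝ)^(i + (j+1) + 1) with hTe
  have hP : ∑ i ∈ Finset.range j, (d i : ℝ) / (b:ℝ)^(i+1)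
      = ∑ i ∈ Finset.range j, (e i : ℝ) / (b:ℝ)^(i+1) :=
    Finset.sum_congr rfl (fun i hi => by rw [hde i (Finset.mem_range.1 hi)])
  have hTdle : Td ≤ 1/(b:ℝ)^(j+1) := tail_le hb hd.1 j
  have hTepos : 0 < Te := by
    obtain ⟨i₀, hi₀, hne⟩ := he.2.1 (j+1)
    have hsumtail : Summable (fun i : ℕ => (e (i + (j+1)) : ℝ) / (b:ℝ)^(i + (j+1) + 1)) :=
      (summable_nat_add_iff (f := fun i : ℕ => (e i : ℝ) / (b:ℝ)^(i+1)) (j+1)).mpr hesum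
    have hterm : (0:ℝ) < (e (i₀ - (j+1) + (j+1)) : ℝ) / (b:ℝ)^(i₀ - (j+1) + (j+1) + 1) := by
      rw [Nat.sub_add_cancel hi₀]
      have : 0 < e i₀ := Nat.pos_of_ne_zero hne
      have : (0:ℝ) < e i₀ := by exact_mod_cast this
      positivity
    calc (0:ℝ) < (e (i₀ - (j+1) + (j+1)) : ℝ) / (b:ℝ)^(i₀ - (j+1) + (j+1) + 1) := hterm
      _ ≤ Te := Summable.le_tsum hsumtail _ (fun i _ => by positivity)
  have hxd : x = ∑ i ∈ Finset.range j, (d i : ℝ) / (b:ℝ)^(i+1)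
      + (d j : ℝ)/(b:ℝ)^(j+1) + Td := by
    rw [hd.2.2, ← hsplitd, Finset.sum_range_succ]
  have hxe : x = ∑ i ∈ Finset.range j, (e i : ℝ) / (b:ℝ)^(i+1)
      + (e j : ℝ)/(b:ℝ)^(j+1) + Te := by
    rw [he.2.2, ← hsplite, Finset.sum_range_succ]
  have hcast : (d j : ℝ) + 1 ≤ (e j : ℝ) := by exact_mod_cast hlt
  have hdiv : ((d j : ℝ) + 1)/(b:ℝ)^(j+1) ≤ (e j : ℝ)/(b:ℝ)^(j+1) := by
    gcongr
  have hsplit : ((d j : ℝ) + 1)/(b:ℝ)^(j+1) = (d j : ℝ)/(b:ℝ)^(j+1) + 1/(b:ℝ)^(j+1) := by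
    rw [add_div]
  linarith

omit hx0 hx1 in
lemma expansion_unique {d e : ℕ → ℕ} (hd : IsExpansion b x d) (he : IsExpansion b x e) :
    d = e := by
  funext j
  induction j using Nat.strong_induction_on with
  | _ j ih =>
    rcases lt_trichotomy (d j) (e j) with h|h|h
    · exact absurd (expansion_lt_aux hb hd he (fun i hi => ih i hi) h) (not_false)
    · exact h
    · exact absurd (expansion_lt_aux hb he hd (fun i hi => (ih i hi).symm) h) (not_false)

lemma isExpansion_dig (hC : x ∉ Cb b) : IsExpansion b x (dig b x) :=
  ⟨fun j => dig_lt hb hx0 j, dig_infinite hb hx0 hx1 hC, tsum_dig hb hx0 hx1⟩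

omit hx1 in
lemma Dn_eventually (hC : x ∉ Cb b) (N : ℕ) : ∀ᶠ y in nhds x, Dn b y N = Dn b x N := by
  have hp : (0:ℝ) < (b:ℝ)^N := by positivity
  have hle : (Dn b x N : ℝ) ≤ x * (b:ℝ)^N := Nat.floor_le (by positivity)
  have hlt1 : (Dn b x N : ℝ) < x * (b:ℝ)^N := by
    rcases lt_or_eq_of_le hle with h | h
    · exact h
    · exfalso
      apply hC
      exact mem_Cb.mpr ⟨N, Dn b x N, by rw [eq_div_iff (ne_of_gt hp), mul_comm] at *; linarith⟩
  have hlt2 : x * (b:ℝ)^N < (Dn b x N : ℝ) + 1 := Nat.lt_floor_add_one _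
  have hcont : ContinuousAt (fun y : ℝ => y * (b:ℝ)^N) x := by fun_prop
  have hmem : Set.Ioo ((Dn b x N : ℝ)) ((Dn b x N : ℝ) + 1) ∈ nhds (x * (b:ℝ)^N) :=
    isOpen_Ioo.mem_nhds ⟨hlt1, hlt2⟩
  filter_upwards [hcont.preimage_mem_nhds hmem] with y hy
  have hy' : (Dn b x N : ℝ) < y * (b:ℝ)^N ∧ y * (b:ℝ)^N < (Dn b x N : ℝ) + 1 := hy
  have h0 : (0:ℝ) ≤ y * (b:ℝ)^N := le_trans (by positivity) hy'.1.le
  exact (Nat.floor_eq_iff h0).mpr ⟨hy'.1.le, hy'.2⟩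

omit hx1 in
lemma dig_eventually (hC : x ∉ Cb b) (j : ℕ) : ∀ᶠ y in nhds x, dig b y j = dig b x j := by
  filter_upwards [Dn_eventually hb hx0 hC (j+1), Dn_eventually hb hx0 hC j] with y h1 h2
  unfold dig
  rw [h1, h2]

end PG

namespace PG

-- squeeze lemmas
noncomputable def gfun (lam : ℝ) (j : ℕ) : ℝ := Real.exp (-lam) * lam ^ j / (Nat.factorial j)

noncomputable def Gfun (lam : ℝ) (j : ℕ) : ℝ := ∑ i ∈ Finset.range (j+1), gfun lam i

variable {b : ℕ} (hb : 2 ≤ b)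

lemma Gfun_continuous (j : ℕ) : Continuous (fun lam : ℝ => Gfun lam j) := by
  apply continuous_finset_sum
  intro i _
  unfold gfun
  fun_prop

include hb

lemma tendsto_Wc {d : ℕ → ℕ} {lam : ℝ} (h : LambdaPoisson b d lam) (j : ℕ) :
    Tendsto (fun k => (Wc b d lam j k : ℝ) / (b:ℝ)^k) atTop (nhds (Gfun lam j)) := by
  have : ∀ k, (Wc b d lam j k : ℝ) / (b:ℝ)^k = ∑ i ∈ Finset.range (j+1), Z b d lam i k :=
    fun k => (sum_Z_eq_Wc b d lam j k).symm
  rw [show (fun k => (Wc b d lam j k : ℝ) / (b:ℝ)^k)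
    = fun k => ∑ i ∈ Finset.range (j+1), Z b d lam i k from funext this]
  exact tendsto_finset_sum _ (fun i _ => h i)

lemma tendsto_Wc_real {d : ℕ → ℕ} (hq : ∀ q : ℚ, 0 < q → LambdaPoisson b d (q : ℝ))
    {lam : ℝ} (hlam : 0 < lam) (j : ℕ) :
    Tendsto (fun k => (Wc b d lam j k : ℝ) / (b:ℝ)^k) atTop (nhds (Gfun lam j)) := by
  rw [Metric.tendsto_atTop]
  intro ε hε
  have hcont := (Gfun_continuous j).continuousAt (x := lam)
  rw [Metric.continuousAt_iff] at hcont
  obtain ⟨δ, hδ, hG⟩ := hcont (ε/3) (by linarith)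
  obtain ⟨q1, hq1l, hq1r⟩ := exists_rat_btwn (show max (lam - δ) (lam/2) < lam by
    simp only [max_lt_iff]; constructor <;> linarith)
  obtain ⟨q2, hq2l, hq2r⟩ := exists_rat_btwn (show lam < lam + δ/2 by linarith)
  have hq1pos : (0:ℚ) < q1 := by
    have : lam/2 < (q1:ℝ) := lt_of_le_of_lt (le_max_right _ _) hq1l
    exact_mod_cast lt_trans (by linarith : (0:ℝ) < lam/2) this
  have hq2pos : (0:ℚ) < q2 := by exact_mod_cast lt_trans hlam hq2l
  have hG1 : dist (Gfun (q1:ℝ) j) (Gfun lam j) < ε/3 := by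
    apply hG
    rw [Real.dist_eq, abs_of_nonpos (by linarith : (q1:ℝ) - lam ≤ 0)]
    have : lam - δ < (q1:ℝ) := lt_of_le_of_lt (le_max_left _ _) hq1l
    linarith
  have hG2 : dist (Gfun (q2:ℝ) j) (Gfun lam j) < ε/3 := by
    apply hG
    rw [Real.dist_eq, abs_of_nonneg (by linarith : (0:ℝ) ≤ (q2:ℝ) - lam)]
    linarith
  obtain ⟨K1, hK1⟩ := Metric.tendsto_atTop.mp (tendsto_Wc hb (hq q1 hq1pos) j) (ε/3) (by linarith)
  obtain ⟨K2, hK2⟩ := Metric.tendsto_atTop.mp (tendsto_Wc hb (hq q2 hq2pos) j) (ε/3) (by linarith)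
  refine ⟨max K1 K2, fun k hk => ?_⟩
  have h1 := hK1 k (le_trans (le_max_left _ _) hk)
  have h2 := hK2 k (le_trans (le_max_right _ _) hk)
  have hb1' : (1:ℕ) ≤ b := by omega
  have hWle1 : (Wc b d lam j k : ℝ) ≤ (Wc b d (q1:ℝ) j k : ℝ) := by
    exact_mod_cast Wc_anti b d hb1' hq1r.le j k
  have hWge2 : (Wc b d (q2:ℝ) j k : ℝ) ≤ (Wc b d lam j k : ℝ) := by
    exact_mod_cast Wc_anti b d hb1' hq2l.le j k
  have hpk : (0:ℝ) < (b:ℝ)^k := by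
    have : (0:ℝ) < (b:ℝ) := hb0 hb
    positivity
  have hd1 : (Wc b d lam j k : ℝ)/(b:ℝ)^k ≤ (Wc b d (q1:ℝ) j k : ℝ)/(b:ℝ)^k := by gcongr
  have hd2 : (Wc b d (q2:ℝ) j k : ℝ)/(b:ℝ)^k ≤ (Wc b d lam j k : ℝ)/(b:ℝ)^k := by gcongr
  rw [Real.dist_eq] at *
  rw [abs_lt] at h1 h2 ⊢
  constructor
  · rw [abs_lt] at hG2
    linarith [h2.1]
  · rw [abs_lt] at hG1
    linarith [h1.2]

lemma lambdaPoisson_of_rat {d : ℕ → ℕ} (hq : ∀ q : ℚ, 0 < q → LambdaPoisson b d (q : ℝ))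
    {lam : ℝ} (hlam : 0 < lam) : LambdaPoisson b d lam := by
  intro j
  have key : ∀ j, Tendsto (fun k => (Wc b d lam j k : ℝ) / (b:ℝ)^k) atTop (nhds (Gfun lam j)) :=
    tendsto_Wc_real hb hq hlam
  cases j with
  | zero =>
    have := key 0
    have heq : ∀ k, Z b d lam 0 k = (Wc b d lam 0 k : ℝ) / (b:ℝ)^k := Z_zero_eq_Wc b d lam
    rw [show (fun k => Z b d lam 0 k) = fun k => (Wc b d lam 0 k : ℝ)/(b:ℝ)^k from funext heq]
    have hG : Gfun lam 0 = Real.exp (-lam) * lam ^ 0 / (Nat.factorial 0) := by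
      unfold Gfun; simp [gfun]
    rw [← hG]
    exact this
  | succ j =>
    have h1 := key (j+1)
    have h2 := key j
    have heq : ∀ k, Z b d lam (j+1) k
        = (Wc b d lam (j+1) k : ℝ)/(b:ℝ)^k - (Wc b d lam j k : ℝ)/(b:ℝ)^k := by
      intro k
      have ha := sum_Z_eq_Wc b d lam (j+1) k
      have hbs := sum_Z_eq_Wc b d lam j k
      rw [Finset.sum_range_succ] at ha
      linarith
    rw [show (fun k => Z b d lam (j+1) k)
      = fun k => (Wc b d lam (j+1) k : ℝ)/(b:ℝ)^k - (Wc b d lam j k : ℝ)/(b:ℝ)^k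
      from funext heq]
    have hG : Gfun lam (j+1) - Gfun lam j = Real.exp (-lam) * lam ^ (j+1) / (Nat.factorial (j+1)) := by
      unfold Gfun
      rw [Finset.sum_range_succ]
      simp [gfun]
    rw [← hG]
    exact h1.sub h2

lemma poisson_iff {x : ℝ} (hx0 : 0 ≤ x) (hx1 : x < 1) (hC : x ∉ Cb b) :
    PoissonGeneric b x ↔ ∀ q : ℚ, 0 < q → ∀ j m : ℕ,
      ∃ K, ∀ k ≥ K, |Z b (dig b x) (q:ℝ) j k - gfun (q:ℝ) j| ≤ 1/((m:ℝ)+1) := by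
  constructor
  · intro hP q hqpos j m
    have hqpos' : (0:ℝ) < (q:ℝ) := by exact_mod_cast hqpos
    have hT := hP (dig b x) (isExpansion_dig hb hx0 hx1 hC) (q:ℝ) hqpos' j
    have hε : (0:ℝ) < 1/((m:ℝ)+1) := by positivity
    obtain ⟨K, hK⟩ := Metric.tendsto_atTop.mp hT _ hε
    refine ⟨K, fun k hk => ?_⟩
    have := hK k hk
    rw [Real.dist_eq] at this
    exact le_of_lt this
  · intro hR d hd lam hlam
    have hdd : d = dig b x := expansion_unique hb hd (isExpansion_dig hb hx0 hx1 hC)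
    subst hdd
    refine lambdaPoisson_of_rat hb (fun q hqpos => ?_) hlam
    intro j
    rw [Metric.tendsto_atTop]
    intro ε hε
    obtain ⟨m, hm⟩ := exists_nat_one_div_lt hε
    obtain ⟨K, hK⟩ := hR q hqpos j m
    refine ⟨K, fun k hk => ?_⟩
    rw [Real.dist_eq]
    calc |Z b (dig b x) (q:ℝ) j k - Real.exp (-(q:ℝ)) * (q:ℝ) ^ j / (Nat.factorial j)|
        = |Z b (dig b x) (q:ℝ) j k - gfun (q:ℝ) j| := rfl
      _ ≤ 1/((m:ℝ)+1) := hK k hk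
      _ < ε := hm

end PG

/-- The set of base-`b` Poisson generic numbers in `[0,1)` is `Π⁰₃`: a countable
intersection of countable unions of closed subsets of `[0,1)`; in particular it is Borel. -/
theorem poissonGeneric_pi3 (b : ℕ) (hb : 2 ≤ b) :
    ∃ F : ℕ → ℕ → Set (Set.Ico (0 : ℝ) 1),
      (∀ m n, IsClosed (F m n)) ∧
      ({x : Set.Ico (0 : ℝ) 1 | PoissonGeneric b (x : ℝ)} = ⋂ m, ⋃ n, F m n) ∧
      MeasurableSet {x : Set.Ico (0 : ℝ) 1 | PoissonGeneric b (x : ℝ)} := by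
  classical
  set X := Set.Ico (0 : ℝ) 1
  set S : Set X := {x : X | PoissonGeneric b (x : ℝ)} with hS
  set Csub : Set X := Subtype.val ⁻¹' (PG.Cb b) with hCsub
  have hcount : Csub.Countable := (PG.Cb_countable b).preimage Subtype.val_injective
  -- the basic pieces
  set B : (ℚ × ℕ × ℕ) → ℕ → Set X := fun i K =>
    {x : X | (x : ℝ) ∉ PG.Cb b ∧ (0 < i.1 → ∀ k ≥ K,
      |Z b (PG.dig b (x : ℝ)) (i.1:ℝ) i.2.1 k - PG.gfun (i.1:ℝ) i.2.1| ≤ 1/((i.2.2:ℝ)+1))}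
    with hB
  -- closure lemma
  have hclose : ∀ i K (x : X), (x : ℝ) ∉ PG.Cb b → x ∈ closure (B i K) → x ∈ B i K := by
    rintro ⟨q, j, m⟩ K x hC hmem
    refine ⟨hC, fun hqpos k hk => ?_⟩
    have hx0 : (0:ℝ) ≤ (x : ℝ) := x.2.1
    have hE : {y : ℝ | ∀ i ∈ Finset.range (PG.plen b (q:ℝ) k), PG.dig b y i = PG.dig b (x:ℝ) i}
        ∈ nhds (x : ℝ) := by
      have := (eventually_all_finset (Finset.range (PG.plen b (q:ℝ) k))
        (l := nhds (x:ℝ))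
        (p := fun i y => PG.dig b y i = PG.dig b (x:ℝ) i)).mpr
        (fun i _ => PG.dig_eventually hb hx0 hC i)
      exact this
    have hE' : Subtype.val ⁻¹' {y : ℝ | ∀ i ∈ Finset.range (PG.plen b (q:ℝ) k),
        PG.dig b y i = PG.dig b (x:ℝ) i} ∈ nhds x :=
      continuous_subtype_val.continuousAt.preimage_mem_nhds hE
    obtain ⟨y, hyE, hyB⟩ := mem_closure_iff_nhds.mp hmem _ hE'
    have hZ : Z b (PG.dig b (x:ℝ)) (q:ℝ) j k = Z b (PG.dig b (y:ℝ)) (q:ℝ) j k :=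
      PG.Z_congr b (q:ℝ) j k (fun i hi => (hyE i (Finset.mem_range.mpr hi)).symm)
    rw [hZ]
    exact hyB.2 hqpos k hk
  -- countable union of closed sets hitting the complement of Csub
  have h0X : ((0:ℝ)) ∈ Set.Ico (0:ℝ) 1 := ⟨le_refl _, one_pos⟩
  have h0C : ((0:ℝ)) ∈ PG.Cb b := PG.mem_Cb.mpr ⟨0, 0, by simp⟩
  have hCne : Csub.Nonempty := ⟨⟨(0:ℝ), h0X⟩, h0C⟩
  obtain ⟨f, hf⟩ := hcount.exists_eq_range hCne
  set G : ℕ → ℕ → Set X := fun m n => {y : X | 1/((n:ℝ)+1) ≤ dist y (f m)} with hG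
  have hGclosed : ∀ m n, IsClosed (G m n) :=
    fun m n => isClosed_le continuous_const (continuous_id.dist continuous_const)
  have hGunion : ∀ m, (⋃ n, G m n) = {f m}ᶜ := by
    intro m
    ext y
    simp only [Set.mem_iUnion, Set.mem_compl_iff, Set.mem_singleton_iff, hG, Set.mem_setOf_eq]
    constructor
    · rintro ⟨n, hn⟩ hy
      rw [hy] at hn
      simp only [dist_self] at hn
      have : (0:ℝ) < 1/((n:ℝ)+1) := by positivity
      linarith
    · intro hy
      have hd : 0 < dist y (f m) := dist_pos.mpr hy
      obtain ⟨n, hn⟩ := exists_nat_one_div_lt hd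
      exact ⟨n, hn.le⟩
  -- countable union of closed singletons for S ∩ Csub
  have hSC : (S ∩ Csub).Countable := hcount.mono Set.inter_subset_right
  obtain ⟨H, hHclosed, hHunion⟩ :
      ∃ H : ℕ → Set X, (∀ n, IsClosed (H n)) ∧ (⋃ n, H n) = S ∩ Csub := by
    rcases Set.eq_empty_or_nonempty (S ∩ Csub) with h | h
    · exact ⟨fun _ => ∅, fun _ => isClosed_empty, by simp [h]⟩
    · obtain ⟨g, hg⟩ := hSC.exists_eq_range h
      exact ⟨fun n => {g n}, fun n => isClosed_singleton, by rw [hg]; exact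
        (Set.iUnion_singleton_eq_range g).symm ▸ rfl⟩
  -- assemble
  set I := (ℚ × ℕ × ℕ) ⊕ ℕ
  set core : I → ℕ → Set X := fun i n => Sum.rec (fun i => closure (B i n)) (fun m => G m n) i
    with hcore
  have hsurj : Function.Surjective (fun m : ℕ => (Denumerable.ofNat I m)) :=
    fun i => ⟨@Encodable.encode I Denumerable.toEncodable i, Denumerable.ofNat_encode i⟩
  have hFclosed : ∀ m n, IsClosed (core (Denumerable.ofNat I m) n ∪ H n) := by
    intro m n
    refine IsClosed.union ?_ (hHclosed n)
    rcases Denumerable.ofNat I m with i | m'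
    · exact isClosed_closure
    · exact hGclosed m' n
  have hFeq : S = ⋂ m, ⋃ n, (core (Denumerable.ofNat I m) n ∪ H n) := by
    have key : (⋂ m, ⋃ n, core (Denumerable.ofNat I m) n ∪ H n)
        = (⋂ i : I, ⋃ n, core i n) ∪ (S ∩ Csub) := by
      have h1 : ∀ m : ℕ, (⋃ n, core (Denumerable.ofNat I m) n ∪ H n)
          = (⋃ n, core (Denumerable.ofNat I m) n) ∪ (S ∩ Csub) := by
        intro m
        rw [Set.iUnion_union_distrib, hHunion]
      rw [show (⋂ m, ⋃ n, core (Denumerable.ofNat I m) n ∪ H n)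
        = ⋂ m, ((⋃ n, core (Denumerable.ofNat I m) n) ∪ (S ∩ Csub)) from
        Set.iInter_congr h1]
      rw [← Set.iInter_union (fun m : ℕ => ⋃ n, core (Denumerable.ofNat I m) n) (S ∩ Csub)]
      congr 1
      exact hsurj.iInter_comp (fun i => ⋃ n, core i n)
    have hIsplit : (⋂ i : I, ⋃ n, core i n)
        = (⋂ i : ℚ × ℕ × ℕ, ⋃ n, closure (B i n)) ∩ (⋂ m, ⋃ n, G m n) := by
      ext x
      simp only [Set.mem_iInter, Set.mem_inter_iff]
      exact ⟨fun h => ⟨fun i => h (Sum.inl i), fun m => h (Sum.inr m)⟩,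
        fun h i => Sum.rec h.1 h.2 i⟩
    have hGpart : (⋂ m, ⋃ n, G m n) = Csubᶜ := by
      rw [Set.iInter_congr hGunion, ← Set.compl_iUnion, Set.iUnion_singleton_eq_range, hf]
    have hTpart : (⋂ i : ℚ × ℕ × ℕ, ⋃ n, closure (B i n)) ∩ Csubᶜ = S ∩ Csubᶜ := by
      ext x
      simp only [Set.mem_inter_iff, Set.mem_iInter, Set.mem_compl_iff]
      constructor
      · rintro ⟨hT, hC⟩
        refine ⟨?_, hC⟩
        have hC' : (x:ℝ) ∉ PG.Cb b := hC
        rw [hS, Set.mem_setOf_eq, PG.poisson_iff hb x.2.1 x.2.2 hC']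
        intro q hq j m
        obtain ⟨K, hK⟩ := Set.mem_iUnion.mp (hT (q, j, m))
        have := hclose (q, j, m) K x hC' hK
        exact ⟨K, this.2 hq⟩
      · rintro ⟨hxS, hC⟩
        refine ⟨?_, hC⟩
        intro i
        obtain ⟨q, j, m⟩ := i
        have hC' : (x:ℝ) ∉ PG.Cb b := hC
        by_cases hq : 0 < q
        · have := (PG.poisson_iff hb x.2.1 x.2.2 hC').mp hxS q hq j m
          obtain ⟨K, hK⟩ := this
          exact Set.mem_iUnion.mpr ⟨K, subset_closure ⟨hC', fun _ => hK⟩⟩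
        · exact Set.mem_iUnion.mpr ⟨0, subset_closure ⟨hC', fun h => absurd h hq⟩⟩
    rw [key, hIsplit, hGpart, hTpart, Set.union_comm, Set.inter_union_compl]
  exact ⟨fun m n => core (Denumerable.ofNat I m) n ∪ H n, hFclosed, hFeq, by
    rw [hFeq]
    exact MeasurableSet.iInter fun m => MeasurableSet.iUnion fun n =>
      (hFclosed m n).measurableSet⟩
end

section
/- Let b ≥ 2 be an integer. If x ∈ (0,1) is λ-Poisson generic in base b for every positive rational λ, then x is Poisson generic in base b, i.e. x is λ-Poisson generic in base b for every positive real λ. -/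
open Filter MeasureTheory

/- ### Auxiliary material -/

lemma occCntF_mono' {k : ℕ} (d : ℕ → ℕ) (w : Fin k → ℕ) : Monotone (occCntF d w) := by
  intro n m hnm
  have hfin : ({p : ℕ | p + k ≤ m ∧ ∀ t : Fin k, d (p + (t : ℕ)) = w t}).Finite :=
    (Set.finite_Iio (m + 1)).subset fun p hp =>
      lt_of_le_of_lt (le_trans (Nat.le_add_right p k) hp.1) (Nat.lt_succ_self m)
  have hsub : {p : ℕ | p + k ≤ n ∧ ∀ t : Fin k, d (p + (t : ℕ)) = w t} ⊆
      {p : ℕ | p + k ≤ m ∧ ∀ t : Fin k, d (p + (t : ℕ)) = w t} :=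
    fun p hp => ⟨hp.1.trans hnm, hp.2⟩
  have := Set.ncard_le_ncard hsub hfin
  rw [← Nat.card_coe_set_eq, ← Nat.card_coe_set_eq] at this
  exact this

lemma card_subtype_le_eq_sum {α : Type*} [Fintype α] (f : α → ℕ) (j : ℕ) :
    Nat.card {w : α // f w ≤ j} = ∑ i ∈ Finset.range (j + 1), Nat.card {w : α // f w = i} := by
  classical
  induction j with
  | zero => simp [Nat.le_zero]
  | succ j ih =>
    rw [Finset.sum_range_succ, ← ih, Nat.card_eq_fintype_card, Nat.card_eq_fintype_card,
      Nat.card_eq_fintype_card, Fintype.card_subtype, Fintype.card_subtype, Fintype.card_subtype,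
      ← Finset.card_union_of_disjoint]
    · congr 1
      rw [← Finset.filter_or]
      apply Finset.filter_congr
      intro w _
      simp [Nat.le_add_one_iff]
    · rw [Finset.disjoint_left]
      intro w hw1 hw2
      simp only [Finset.mem_filter] at hw1 hw2
      omega

/-- Cumulative version of `Z`. -/
noncomputable def Scum (b : ℕ) (d : ℕ → ℕ) (lam : ℝ) (j k : ℕ) : ℝ :=
  (Nat.card {w : Fin k → Fin b //
      occCntF d (fun t => ((w t : Fin b) : ℕ)) (⌊lam * (b : ℝ) ^ k⌋₊ + k) ≤ j} : ℝ) /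
    (b : ℝ) ^ k

lemma Scum_eq_sum (b : ℕ) (d : ℕ → ℕ) (lam : ℝ) (j k : ℕ) :
    Scum b d lam j k = ∑ i ∈ Finset.range (j + 1), Z b d lam i k := by
  unfold Scum Z
  rw [← Finset.sum_div]
  congr 1
  rw [card_subtype_le_eq_sum]
  push_cast
  rfl

lemma Scum_anti (b : ℕ) (hb : 2 ≤ b) (d : ℕ → ℕ) {lam1 lam2 : ℝ} (hle : lam1 ≤ lam2)
    (j k : ℕ) : Scum b d lam2 j k ≤ Scum b d lam1 j k := by
  classical
  unfold Scum
  have hb0 : (0 : ℝ) < (b : ℝ) := by exact_mod_cast lt_of_lt_of_le two_pos hb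
  have hbpos : (0 : ℝ) < (b : ℝ) ^ k := by positivity
  gcongr
  rw [Nat.card_eq_fintype_card, Nat.card_eq_fintype_card]
  apply Fintype.card_subtype_mono
  intro w hw
  refine le_trans ?_ hw
  apply occCntF_mono'
  have : ⌊lam1 * (b : ℝ) ^ k⌋₊ ≤ ⌊lam2 * (b : ℝ) ^ k⌋₊ :=
    Nat.floor_le_floor (by gcongr)
  omega

/-- Limit of the cumulative distribution. -/
noncomputable def Flim (j : ℕ) (q : ℝ) : ℝ :=
  ∑ i ∈ Finset.range (j + 1), Real.exp (-q) * q ^ i / (Nat.factorial i)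

lemma Flim_continuous (j : ℕ) : Continuous (Flim j) := by
  apply continuous_finset_sum
  intro i _
  exact ((Real.continuous_exp.comp continuous_neg).mul (continuous_pow i)).div_const _

lemma Scum_tendsto {b : ℕ} {d : ℕ → ℕ} {lam : ℝ} (hq : LambdaPoisson b d lam) (j : ℕ) :
    Tendsto (fun k => Scum b d lam j k) atTop (nhds (Flim j lam)) := by
  simp only [Scum_eq_sum]
  exact tendsto_finset_sum _ fun i _ => hq i

/-- If `x ∈ (0,1)` is `lam`-Poisson generic in base `b` for every positive rational `lam`,
then `x` is Poisson generic in base `b`. -/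
theorem poissonGeneric_of_rat (b : ℕ) (hb : 2 ≤ b) (x : ℝ) (hx : x ∈ Set.Ioo (0 : ℝ) 1)
    (h : ∀ d, IsExpansion b x d → ∀ q : ℚ, 0 < q → LambdaPoisson b d (q : ℝ)) :
    PoissonGeneric b x := by
  intro d hd lam hlam
  have hq : ∀ q : ℚ, 0 < q → LambdaPoisson b d (q : ℝ) := h d hd
  have key : ∀ j : ℕ, Tendsto (fun k => Scum b d lam j k) atTop (nhds (Flim j lam)) := by
    intro j
    rw [Metric.tendsto_atTop]
    intro ε hε
    obtain ⟨δ, hδ, hball⟩ := Metric.continuousAt_iff.mp (Flim_continuous j).continuousAt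
      (ε / 2) (half_pos hε)
    obtain ⟨q1, hq1a, hq1b⟩ := exists_rat_btwn (max_lt hlam (by linarith : lam - δ < lam))
    obtain ⟨q2, hq2a, hq2b⟩ := exists_rat_btwn (lt_add_of_pos_right lam hδ)
    have hq1pos : (0 : ℚ) < q1 := by
      have : (0 : ℝ) < (q1 : ℝ) := lt_of_le_of_lt (le_max_left _ _) hq1a
      exact_mod_cast this
    have hq2pos : (0 : ℚ) < q2 := by
      have : (0 : ℝ) < (q2 : ℝ) := hlam.trans hq2a
      exact_mod_cast this
    have hF1 : dist (Flim j (q1 : ℝ)) (Flim j lam) < ε / 2 := by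
      apply hball
      rw [Real.dist_eq, abs_lt]
      have := lt_of_le_of_lt (le_max_right 0 (lam - δ)) hq1a
      constructor <;> linarith
    have hF2 : dist (Flim j (q2 : ℝ)) (Flim j lam) < ε / 2 := by
      apply hball
      rw [Real.dist_eq, abs_lt]
      constructor <;> linarith
    obtain ⟨N1, hN1⟩ := Metric.tendsto_atTop.mp (Scum_tendsto (hq q1 hq1pos) j) (ε / 2)
      (half_pos hε)
    obtain ⟨N2, hN2⟩ := Metric.tendsto_atTop.mp (Scum_tendsto (hq q2 hq2pos) j) (ε / 2)
      (half_pos hε)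
    refine ⟨max N1 N2, fun k hk => ?_⟩
    have h1 := hN1 k (le_trans (le_max_left _ _) hk)
    have h2 := hN2 k (le_trans (le_max_right _ _) hk)
    have hm1 : Scum b d lam j k ≤ Scum b d (q1 : ℝ) j k := Scum_anti b hb d hq1b.le j k
    have hm2 : Scum b d (q2 : ℝ) j k ≤ Scum b d lam j k := Scum_anti b hb d hq2a.le j k
    rw [Real.dist_eq, abs_lt] at h1 h2 hF1 hF2 ⊢
    constructor <;> linarith
  intro j
  match j with
  | 0 =>
    have := key 0
    have heq : ∀ k, Scum b d lam 0 k = Z b d lam 0 k := by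
      intro k
      rw [Scum_eq_sum]; simp
    simp only [heq] at this
    convert this using 2
    simp [Flim]
  | (i + 1) =>
    have := (key (i + 1)).sub (key i)
    have heq : ∀ k, Scum b d lam (i + 1) k - Scum b d lam i k = Z b d lam (i + 1) k := by
      intro k
      rw [Scum_eq_sum, Scum_eq_sum, Finset.sum_range_succ]
      ring
    simp only [heq] at this
    convert this using 2
    rw [Flim, Flim, Finset.sum_range_succ]
    ring
end

section
/- Let b ≥ 2 be an integer. If x ∈ (0,1) is not Poisson generic in base b, then x ∈ Bad_k for infinitely many positive integers k; consequently, for every m, the intersection ⋂_{n ≥ m} E_n consists entirely of real numbers that are Poisson generic in base b. -/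
open Filter MeasureTheory

/-- `NN b n = b^(2n)`. -/
def NN (b n : ℕ) : ℕ := b ^ (2 * n)

/-- `lam ∈ L_k`: `lam = p/q` for some positive integers `p` and `q ≤ k`, with `lam < k`. -/
def Lmem (k : ℕ) (lam : ℚ) : Prop :=
  ∃ p q : ℕ, 0 < p ∧ 1 ≤ q ∧ q ≤ k ∧ lam = (p : ℚ) / (q : ℚ) ∧ lam < (k : ℚ)

/-- `Bad b lam k j ε`: the set of `x ∈ (0,1)` with `|Z^lam_{j,k}(x) - e^{-lam} lam^j/j!| > ε`. -/
def Bad (b : ℕ) (lam : ℝ) (k j : ℕ) (ε : ℝ) : Set ℝ :=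
  {x | x ∈ Set.Ioo (0 : ℝ) 1 ∧ ∃ d, IsExpansion b x d ∧
    ε < |Z b d lam j k - Real.exp (-lam) * lam ^ j / (Nat.factorial j)|}

/-- `Bad_k = ⋃_{j ∈ J_k} ⋃_{lam ∈ L_k} Bad(lam, k, j, 1/k)` where `J_k = {0,…,b^k-1}`. -/
def BadK (b k : ℕ) : Set ℝ :=
  ⋃ j ∈ Finset.range (b ^ k), ⋃ lam : ℚ, ⋃ _ : Lmem k lam, Bad b (lam : ℝ) k j (1 / k)

/-- `E_n = (0,1) ∖ ⋃_{N_n ≤ k < N_{n+1}} Bad_k`. -/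
def E (b n : ℕ) : Set ℝ :=
  Set.Ioo (0 : ℝ) 1 \ ⋃ k ∈ Finset.Ico (NN b n) (NN b (n + 1)), BadK b k


/-! ### Auxiliary lemmas -/

lemma occ_step' {k : ℕ} (d : ℕ → ℕ) (w : Fin k → ℕ) (n : ℕ)
    (h : ¬ (k ≤ n + 1 ∧ ∀ t : Fin k, d (n + 1 - k + (t : ℕ)) = w t)) :
    occCntF d w (n + 1) = occCntF d w n := by
  unfold occCntF
  refine Nat.card_congr (Equiv.subtypeEquivRight fun p => ?_)
  constructor
  · rintro ⟨h1, h2⟩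
    refine ⟨?_, h2⟩
    by_contra hc
    have hp : p = n + 1 - k := by omega
    exact h ⟨by omega, fun t => by rw [← hp]; exact h2 t⟩
  · rintro ⟨h1, h2⟩
    exact ⟨by omega, h2⟩

lemma exists_w0 (b k : ℕ) (hb : 0 < b) (d : ℕ → ℕ) (n : ℕ) :
    ∃ w₀ : Fin k → Fin b, ∀ w : Fin k → Fin b,
      occCntF d (fun t => ((w t : Fin b) : ℕ)) (n + 1) ≠
        occCntF d (fun t => ((w t : Fin b) : ℕ)) n → w = w₀ := by
  refine ⟨fun t => ⟨d (n + 1 - k + (t : ℕ)) % b, Nat.mod_lt _ hb⟩, ?_⟩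
  intro w hw
  have hc : k ≤ n + 1 ∧ ∀ t : Fin k, d (n + 1 - k + (t : ℕ)) = (w t : ℕ) := by
    by_contra hc; exact hw (occ_step' d _ n hc)
  funext t
  apply Fin.ext
  show (w t : ℕ) = d (n + 1 - k + (t : ℕ)) % b
  rw [hc.2 t]
  exact (Nat.mod_eq_of_lt (w t).isLt).symm

/-- The number of length-`k` words with exactly `j` occurrences in the first `n` digits. -/
noncomputable def Wc (b k : ℕ) (d : ℕ → ℕ) (j n : ℕ) : ℕ :=
  Nat.card {w : Fin k → Fin b //
    occCntF d (fun t => ((w t : Fin b) : ℕ)) n = j}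

lemma card_filter_le {α : Type*} [Fintype α] [DecidableEq α] (P Q : α → Prop)
    [DecidablePred P] [DecidablePred Q] (a₀ : α) (h : ∀ a, a ≠ a₀ → (P a → Q a)) :
    (Finset.univ.filter P).card ≤ (Finset.univ.filter Q).card + 1 := by
  calc (Finset.univ.filter P).card ≤ (insert a₀ (Finset.univ.filter Q)).card := by
        apply Finset.card_le_card
        intro a ha
        simp only [Finset.mem_filter, Finset.mem_univ, true_and] at ha
        by_cases hc : a = a₀
        · simp [hc]
        · simp [Finset.mem_insert, hc, h a hc ha]
    _ ≤ _ := Finset.card_insert_le _ _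

open Classical in
lemma Wc_step (b k : ℕ) (hb : 0 < b) (d : ℕ → ℕ) (j n : ℕ) :
    Wc b k d j (n + 1) ≤ Wc b k d j n + 1 ∧ Wc b k d j n ≤ Wc b k d j (n + 1) + 1 := by
  obtain ⟨w₀, hw₀⟩ := exists_w0 b k hb d n
  set P : (Fin k → Fin b) → Prop :=
    fun w => occCntF d (fun t => ((w t : Fin b) : ℕ)) (n + 1) = j with hP
  set Q : (Fin k → Fin b) → Prop :=
    fun w => occCntF d (fun t => ((w t : Fin b) : ℕ)) n = j with hQ
  have h1 : Wc b k d j (n + 1) = (Finset.univ.filter P).card := by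
    rw [Wc, Nat.card_eq_fintype_card, Fintype.card_subtype]
  have h2 : Wc b k d j n = (Finset.univ.filter Q).card := by
    rw [Wc, Nat.card_eq_fintype_card, Fintype.card_subtype]
  have key : ∀ w : Fin k → Fin b, w ≠ w₀ → (P w ↔ Q w) := by
    intro w hw
    have : occCntF d (fun t => ((w t : Fin b) : ℕ)) (n + 1) =
        occCntF d (fun t => ((w t : Fin b) : ℕ)) n := by
      by_contra hc; exact hw (hw₀ w hc)
    simp [hP, hQ, this]
  constructor
  · rw [h1, h2]
    exact card_filter_le P Q w₀ fun a ha => (key a ha).mp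
  · rw [h1, h2]
    exact card_filter_le Q P w₀ fun a ha => (key a ha).mpr

lemma Wc_diff (b k : ℕ) (hb : 0 < b) (d : ℕ → ℕ) (j n m : ℕ) :
    Wc b k d j (n + m) ≤ Wc b k d j n + m ∧ Wc b k d j n ≤ Wc b k d j (n + m) + m := by
  induction m with
  | zero => simp
  | succ m ih =>
    have h := Wc_step b k hb d j (n + m)
    have hnm : n + (m + 1) = (n + m) + 1 := by omega
    rw [hnm]
    omega

lemma Z_eq_Wc (b : ℕ) (d : ℕ → ℕ) (lam : ℝ) (j k : ℕ) :
    Z b d lam j k = (Wc b k d j (⌊lam * (b : ℝ) ^ k⌋₊ + k) : ℝ) / (b : ℝ) ^ k := rfl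

lemma Z_diff (b : ℕ) (hb : 2 ≤ b) (d : ℕ → ℕ) (j k : ℕ) {lam mu : ℝ}
    (h1 : 0 ≤ lam) (h2 : lam ≤ mu) :
    |Z b d mu j k - Z b d lam j k| ≤ ((mu - lam) * (b : ℝ) ^ k + 1) / (b : ℝ) ^ k := by
  have hb0 : 0 < b := by omega
  have hbR : (0:ℝ) < (b : ℝ) ^ k := by positivity
  have hmu0 : 0 ≤ mu * (b : ℝ) ^ k := by nlinarith
  have hfl : ⌊lam * (b : ℝ) ^ k⌋₊ ≤ ⌊mu * (b : ℝ) ^ k⌋₊ :=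
    Nat.floor_le_floor (by nlinarith)
  set a := ⌊lam * (b : ℝ) ^ k⌋₊ with ha
  set m := ⌊mu * (b : ℝ) ^ k⌋₊ - a with hm
  have hn' : ⌊mu * (b : ℝ) ^ k⌋₊ + k = (a + k) + m := by omega
  rw [Z_eq_Wc, Z_eq_Wc, hn', div_sub_div_same, abs_div, abs_of_pos hbR]
  have hWd := Wc_diff b k hb0 d j (a + k) m
  have habs : |(Wc b k d j ((a + k) + m) : ℝ) - (Wc b k d j (a + k) : ℝ)| ≤ (m : ℝ) := by
    rw [abs_le]
    constructor
    · have := hWd.2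
      have : (Wc b k d j (a + k) : ℝ) ≤ (Wc b k d j ((a + k) + m) : ℝ) + m := by
        exact_mod_cast this
      linarith
    · have := hWd.1
      have : (Wc b k d j ((a + k) + m) : ℝ) ≤ (Wc b k d j (a + k) : ℝ) + m := by
        exact_mod_cast this
      linarith
  have hmle : (m : ℝ) ≤ (mu - lam) * (b : ℝ) ^ k + 1 := by
    have hcast : (m : ℝ) = (⌊mu * (b : ℝ) ^ k⌋₊ : ℝ) - (a : ℝ) := by
      rw [hm, Nat.cast_sub hfl]
    have hu : (⌊mu * (b : ℝ) ^ k⌋₊ : ℝ) ≤ mu * (b : ℝ) ^ k := Nat.floor_le hmu0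
    have hl : lam * (b : ℝ) ^ k < (a : ℝ) + 1 := Nat.lt_floor_add_one _
    rw [hcast]
    nlinarith
  gcongr
  linarith [habs, hmle]

lemma finite_bad_poisson (b : ℕ) (hb : 2 ≤ b) (x : ℝ) (hx : x ∈ Set.Ioo (0:ℝ) 1)
    (hfin : {k : ℕ | x ∈ BadK b k}.Finite) : PoissonGeneric b x := by
  intro d hd lam hlam j
  have hb0 : 0 < b := by omega
  set f : ℝ → ℝ := fun l => Real.exp (-l) * l ^ j / (Nat.factorial j) with hfdef
  set lam' : ℕ → ℝ := fun k => (⌈lam * (k : ℝ)⌉₊ : ℝ) / (k : ℝ) with hlam'def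
  have hlam'_ge : ∀ k : ℕ, 1 ≤ k → lam ≤ lam' k := by
    intro k hk
    have hk0 : (0:ℝ) < (k : ℝ) := by exact_mod_cast hk
    rw [hlam'def]
    rw [le_div_iff₀ hk0]
    exact Nat.le_ceil _
  have hlam'_lt : ∀ k : ℕ, 1 ≤ k → lam' k ≤ lam + 1 / (k : ℝ) := by
    intro k hk
    have hk0 : (0:ℝ) < (k : ℝ) := by exact_mod_cast hk
    rw [hlam'def, div_le_iff₀ hk0]
    have h1 : (⌈lam * (k:ℝ)⌉₊ : ℝ) < lam * k + 1 :=
      Nat.ceil_lt_add_one (by positivity)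
    have h2 : lam * k + 1 = (lam + 1 / (k:ℝ)) * k := by field_simp
    linarith
  have hlam'_tendsto : Tendsto lam' atTop (nhds lam) := by
    have h0 : Tendsto (fun k : ℕ => lam + 1 / (k:ℝ)) atTop (nhds lam) := by
      have h1 := tendsto_one_div_atTop_nhds_zero_nat (𝕜 := ℝ)
      simpa using tendsto_const_nhds.add h1
    apply tendsto_of_tendsto_of_tendsto_of_le_of_le' tendsto_const_nhds h0
    · filter_upwards [eventually_ge_atTop 1] with k hk using hlam'_ge k hk
    · filter_upwards [eventually_ge_atTop 1] with k hk using hlam'_lt k hk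
  have hfcont : Continuous f := by
    apply Continuous.div_const
    exact (Real.continuous_exp.comp continuous_neg).mul (continuous_pow j)
  have hftend : Tendsto (fun k => f (lam' k)) atTop (nhds (f lam)) :=
    (hfcont.tendsto lam).comp hlam'_tendsto
  show Tendsto (fun k => Z b d lam j k) atTop (nhds (f lam))
  rw [Metric.tendsto_atTop]
  intro ε hε
  have E1 : ∀ᶠ k : ℕ in atTop, dist (f (lam' k)) (f lam) < ε / 4 :=
    Metric.tendsto_nhds.mp hftend (ε / 4) (by positivity)
  have E2 : ∀ᶠ k : ℕ in atTop, x ∉ BadK b k := by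
    rw [← Nat.cofinite_eq_atTop]
    rw [Filter.eventually_cofinite]
    simpa using hfin
  have E4 : ∀ᶠ k : ℕ in atTop, lam + 1 < (k : ℝ) :=
    tendsto_natCast_atTop_atTop.eventually_gt_atTop (lam + 1)
  have E5 : ∀ᶠ k : ℕ in atTop, 3 / (k : ℝ) < ε / 2 := by
    have h1 : Tendsto (fun k : ℕ => 3 / (k:ℝ)) atTop (nhds 0) := by
      have := tendsto_one_div_atTop_nhds_zero_nat (𝕜 := ℝ)
      have h3 := this.const_mul (3:ℝ)
      simpa [div_eq_mul_inv, mul_comm] using h3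
    exact h1.eventually_lt_const (by positivity)
  have H : ∀ᶠ k : ℕ in atTop, dist (Z b d lam j k) (f lam) < ε := by
    filter_upwards [E1, E2, E4, E5, eventually_ge_atTop (max 1 (j + 1))]
      with k h1 h2 h4 h5 hk
    have hk1 : 1 ≤ k := le_trans (le_max_left _ _) hk
    have hkj : j + 1 ≤ k := le_trans (le_max_right _ _) hk
    have hk0 : (0:ℝ) < (k : ℝ) := by exact_mod_cast hk1
    have hkpow : k ≤ b ^ k :=
      le_of_lt (lt_of_lt_of_le (Nat.lt_two_pow_self (n := k)) (Nat.pow_le_pow_left hb k))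
    have hjlt : j < b ^ k := by omega
    -- the rational approximation
    set q : ℕ := ⌈lam * (k : ℝ)⌉₊ with hq
    have hq0 : 0 < q := Nat.ceil_pos.mpr (by positivity)
    set ql : ℚ := (q : ℚ) / (k : ℚ) with hql
    have hqlt : q < k * k := by
      have hc1 : (q : ℝ) < lam * k + 1 := Nat.ceil_lt_add_one (by positivity)
      have hc2 : lam * k + 1 < ((k:ℝ) - 1) * k + 1 := by nlinarith
      have hc3 : ((k:ℝ) - 1) * k + 1 ≤ (k:ℝ) * k := by nlinarith
      have : (q : ℝ) < ((k : ℕ) * k : ℕ) := by push_cast; nlinarith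
      exact_mod_cast this
    have hLmem : Lmem k ql := by
      refine ⟨q, k, hq0, hk1, le_refl k, rfl, ?_⟩
      rw [hql, div_lt_iff₀ (by exact_mod_cast hk1)]
      exact_mod_cast hqlt
    have hcast : ((ql : ℚ) : ℝ) = lam' k := by
      rw [hql, hlam'def]
      push_cast
      rfl
    have hnotbad : x ∉ Bad b ((ql : ℚ) : ℝ) k j (1 / (k:ℝ)) := by
      intro hmem
      apply h2
      rw [BadK]
      simp only [Set.mem_iUnion, Finset.mem_range]
      exact ⟨j, hjlt, ql, hLmem, by exact_mod_cast hmem⟩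
    have hclose : |Z b d (lam' k) j k - f (lam' k)| ≤ 1 / (k:ℝ) := by
      by_contra hcon
      push_neg at hcon
      rw [← hcast] at hcon
      exact hnotbad ⟨hx, d, hd, hcon⟩
    have hZd : |Z b d lam j k - Z b d (lam' k) j k| ≤ 2 / (k:ℝ) := by
      have h := Z_diff b hb d j k (le_of_lt hlam) (hlam'_ge k hk1)
      rw [abs_sub_comm] at h
      refine h.trans ?_
      have hbk : (0:ℝ) < (b:ℝ)^k := by positivity
      rw [div_le_iff₀ hbk]
      have hd1 : lam' k - lam ≤ 1 / (k:ℝ) := by linarith [hlam'_lt k hk1]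
      have hd2 : (k:ℝ) ≤ (b:ℝ)^k := by exact_mod_cast hkpow
      have hd3 : (lam' k - lam) * (b:ℝ)^k ≤ 1 / (k:ℝ) * (b:ℝ)^k :=
        mul_le_mul_of_nonneg_right hd1 hbk.le
      have hd4 : (1:ℝ) ≤ 1 / (k:ℝ) * (b:ℝ)^k := by
        rw [div_mul_eq_mul_div, le_div_iff₀ hk0]
        linarith
      have hd5 : (2:ℝ) / k * (b:ℝ)^k = 1/(k:ℝ)*(b:ℝ)^k + 1/(k:ℝ)*(b:ℝ)^k := by ring
      linarith
    rw [Real.dist_eq]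
    have tri1 := abs_sub_le (Z b d lam j k) (Z b d (lam' k) j k) (f lam)
    have tri2 := abs_sub_le (Z b d (lam' k) j k) (f (lam' k)) (f lam)
    rw [Real.dist_eq] at h1
    have hsum : (2:ℝ)/(k:ℝ) + 1/(k:ℝ) = 3/(k:ℝ) := by ring
    linarith
  obtain ⟨N, hN⟩ := eventually_atTop.mp H
  exact ⟨N, hN⟩

/-- If `x ∈ (0,1)` is not Poisson generic in base `b` then `x ∈ Bad_k` for infinitely
many `k`; consequently, for every `m`, every element of `⋂_{n ≥ m} E_n` is Poisson
generic in base `b`. -/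
theorem notPoisson_infinitely_bad_and_inter_E_poisson (b : ℕ) (hb : 2 ≤ b) :
    (∀ x ∈ Set.Ioo (0 : ℝ) 1, ¬ PoissonGeneric b x → {k : ℕ | x ∈ BadK b k}.Infinite) ∧
      ∀ m : ℕ, ∀ x ∈ ⋂ (n : ℕ) (_ : m ≤ n), E b n, PoissonGeneric b x := by
  constructor
  · intro x hx hP
    by_contra hcon
    exact hP (finite_bad_poisson b hb x hx (Set.not_infinite.mp hcon))
  · intro m x hxI
    have hxmem : ∀ n, m ≤ n → x ∈ E b n := fun n hn =>
      Set.mem_iInter.mp (Set.mem_iInter.mp hxI n) hn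
    have hx : x ∈ Set.Ioo (0:ℝ) 1 := (hxmem m (le_refl m)).1
    apply finite_bad_poisson b hb x hx
    apply Set.Finite.subset (Set.finite_Iio (NN b m))
    intro k hk
    simp only [Set.mem_setOf_eq] at hk
    by_contra hklt
    simp only [Set.mem_Iio, not_lt] at hklt
    set L := Nat.log b k with hL
    have hbm1 : 1 ≤ NN b m := Nat.one_le_pow _ _ (by omega)
    have hk0 : k ≠ 0 := by omega
    have h1 : b ^ L ≤ k := Nat.pow_log_le_self b hk0
    have h2 : k < b ^ (L + 1) := Nat.lt_pow_succ_log_self (by omega) k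
    have h2m : 2 * m ≤ L := by
      have := (Nat.le_log_iff_pow_le (b := b) (by omega) hk0).mpr hklt
      exact this
    set n := L / 2 with hn
    have hmn : m ≤ n := by omega
    have hlow : NN b n ≤ k :=
      le_trans (Nat.pow_le_pow_right (by omega) (by omega)) h1
    have hhigh : k < NN b (n + 1) :=
      lt_of_lt_of_le h2 (Nat.pow_le_pow_right (by omega) (by omega))
    have hE := hxmem n hmn
    apply hE.2
    exact Set.mem_biUnion (Finset.mem_Ico.mpr ⟨hlow, hhigh⟩) hk
end
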